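/- With T_n, the lifts [r s], and the section u as in the Schur covering group of S_n: for all pairwise distinct r, s, r' ∈ {1,...,n} with r < s and r < r', and every σ ∈ S_n, one has σ ▷ u_{(r s r')} = u_{σ (r s r') σ^{-1}}; that is, the section u is conjugation-equivariant on 3-cycles whose smallest entry is written first. -/

import Mathlib

/-- Generators of the Schur covering group `T_n` of `S_n`:
`Sum.inl r` is the generator `t_r` (for `0 ≤ r < n-1`, lifting the transposition
`(r, r+1)`), and `Sum.inr ()` is the central generator `z`. -/
abbrev TGen (n : ℕ) := Sum (Fin (n - 1)) Unit

/-- The defining relators of `T_n`: `z² = 1`, `t_r² = 1`, `t_r t_s = t_s t_r z` for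
`|r − s| > 1`, the braid relations `t_r t_{r+1} t_r = t_{r+1} t_r t_{r+1}`, and
`z t_r = t_r z`. -/
def TnRels (n : ℕ) : Set (FreeGroup (TGen n)) :=
  {w | w = (FreeGroup.of (Sum.inr () : TGen n)) ^ 2 ∨
    (∃ r : Fin (n - 1), w = (FreeGroup.of (Sum.inl r : TGen n)) ^ 2) ∨
    (∃ r s : Fin (n - 1), ((r : ℕ) + 1 < (s : ℕ) ∨ (s : ℕ) + 1 < (r : ℕ)) ∧
      w = FreeGroup.of (Sum.inl r : TGen n) * FreeGroup.of (Sum.inl s : TGen n) *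
        (FreeGroup.of (Sum.inl s : TGen n) * FreeGroup.of (Sum.inl r : TGen n) *
          FreeGroup.of (Sum.inr () : TGen n))⁻¹) ∨
    (∃ r s : Fin (n - 1), (s : ℕ) = (r : ℕ) + 1 ∧
      w = FreeGroup.of (Sum.inl r : TGen n) * FreeGroup.of (Sum.inl s : TGen n) *
          FreeGroup.of (Sum.inl r : TGen n) *
        (FreeGroup.of (Sum.inl s : TGen n) * FreeGroup.of (Sum.inl r : TGen n) *
          FreeGroup.of (Sum.inl s : TGen n))⁻¹) ∨
    (∃ r : Fin (n - 1),
      w = FreeGroup.of (Sum.inr () : TGen n) * FreeGroup.of (Sum.inl r : TGen n) *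
        (FreeGroup.of (Sum.inl r : TGen n) * FreeGroup.of (Sum.inr () : TGen n))⁻¹)}

/-- The Schur covering group `T_n` of the symmetric group `S_n`. -/
abbrev Tn (n : ℕ) := PresentedGroup (TnRels n)

/-- The central element `z` of `T_n`. -/
def tz (n : ℕ) : Tn n := PresentedGroup.of (Sum.inr ())

/-- The generator `t_r` of `T_n` (indexed from `0`; junk value `1` if `r ≥ n-1`). -/
def tt (n : ℕ) (r : ℕ) : Tn n :=
  if h : r < n - 1 then PresentedGroup.of (Sum.inl ⟨r, h⟩) else 1

/-- The distinguished lift `[r s] ∈ T_n` of the transposition `(r s)` (0-indexed),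
defined recursively by `[r, r+1] = t_r`, `[r s] = t_r [r+1, s] t_r z` for
`r + 1 < s`, and `[r s] = [s r] z` for `r > s`. -/
def bk (n : ℕ) (r s : ℕ) : Tn n :=
  if _ : r + 1 = s then tt n r
  else if _ : r + 1 < s then tt n r * bk n (r + 1) s * tt n r * tz n
  else if _ : s < r then bk n s r * tz n
  else 1
termination_by 2 * (max r s - min r s) + (r - s)
decreasing_by all_goals omega

namespace SchurAux
variable {n : ℕ}

lemma rel_one {w : FreeGroup (TGen n)} (hw : w ∈ TnRels n) :
    PresentedGroup.mk (TnRels n) w = 1 :=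
  (QuotientGroup.eq_one_iff w).mpr (Subgroup.subset_normalClosure hw)

lemma mk_of (g : TGen n) :
    PresentedGroup.mk (TnRels n) (FreeGroup.of g) = PresentedGroup.of g := rfl

lemma z_sq : tz n * tz n = 1 := by
  have h := rel_one (n := n) (w := (FreeGroup.of (Sum.inr () : TGen n)) ^ 2) (Or.inl rfl)
  rw [map_pow, sq, mk_of] at h
  exact h

lemma of_eq_tt (r : Fin (n-1)) : (PresentedGroup.of (Sum.inl r) : Tn n) = tt n r.val := by
  rw [tt, dif_pos r.isLt]

lemma t_sq (r : ℕ) : tt n r * tt n r = 1 := by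
  by_cases h : r < n - 1
  · have hr := rel_one (n := n)
      (w := (FreeGroup.of (Sum.inl ⟨r, h⟩ : TGen n)) ^ 2) (Or.inr (Or.inl ⟨⟨r,h⟩, rfl⟩))
    rw [map_pow, sq, mk_of] at hr
    rw [tt, dif_pos h]
    exact hr
  · rw [tt, dif_neg h]; simp

lemma t_comm {r s : ℕ} (hr : r < n - 1) (hs : s < n - 1) (h : r + 1 < s ∨ s + 1 < r) :
    tt n r * tt n s = tt n s * tt n r * tz n := by
  have hw := rel_one (n := n)
    (w := FreeGroup.of (Sum.inl ⟨r,hr⟩ : TGen n) * FreeGroup.of (Sum.inl ⟨s,hs⟩ : TGen n) *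
        (FreeGroup.of (Sum.inl ⟨s,hs⟩ : TGen n) * FreeGroup.of (Sum.inl ⟨r,hr⟩ : TGen n) *
          FreeGroup.of (Sum.inr () : TGen n))⁻¹)
    (Or.inr (Or.inr (Or.inl ⟨⟨r,hr⟩, ⟨s,hs⟩, h, rfl⟩)))
  rw [map_mul, map_inv, mul_inv_eq_one, map_mul, map_mul, map_mul] at hw
  simp only [mk_of, of_eq_tt] at hw
  simpa [tz] using hw

lemma braid {r : ℕ} (h : r + 1 < n - 1) :
    tt n r * tt n (r+1) * tt n r = tt n (r+1) * tt n r * tt n (r+1) := by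
  have hr : r < n - 1 := by omega
  have hw := rel_one (n := n)
    (w := FreeGroup.of (Sum.inl ⟨r,hr⟩ : TGen n) * FreeGroup.of (Sum.inl ⟨r+1,h⟩ : TGen n) *
          FreeGroup.of (Sum.inl ⟨r,hr⟩ : TGen n) *
        (FreeGroup.of (Sum.inl ⟨r+1,h⟩ : TGen n) * FreeGroup.of (Sum.inl ⟨r,hr⟩ : TGen n) *
          FreeGroup.of (Sum.inl ⟨r+1,h⟩ : TGen n))⁻¹)
    (Or.inr (Or.inr (Or.inr (Or.inl ⟨⟨r,hr⟩, ⟨r+1,h⟩, rfl, rfl⟩))))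
  rw [map_mul, map_inv, mul_inv_eq_one, map_mul, map_mul, map_mul, map_mul] at hw
  simpa only [mk_of, of_eq_tt] using hw

lemma z_comm (x : Tn n) : Commute (tz n) x := by
  have hgen : ∀ g : TGen n, Commute (tz n) (PresentedGroup.of (rels := TnRels n) g) := by
    rintro (r | u)
    · have hw := rel_one (n := n)
        (w := FreeGroup.of (Sum.inr () : TGen n) * FreeGroup.of (Sum.inl r : TGen n) *
          (FreeGroup.of (Sum.inl r : TGen n) * FreeGroup.of (Sum.inr () : TGen n))⁻¹)
        (Or.inr (Or.inr (Or.inr (Or.inr ⟨r, rfl⟩))))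
      rw [map_mul, map_inv, mul_inv_eq_one, map_mul, map_mul] at hw
      exact hw
    · rfl
  have hx : x ∈ Subgroup.closure (Set.range (PresentedGroup.of : TGen n → Tn n)) := by
    rw [PresentedGroup.closure_range_of]; trivial
  induction hx using Subgroup.closure_induction with
  | mem y hy => obtain ⟨g, rfl⟩ := hy; exact hgen g
  | one => exact Commute.one_right _
  | mul a b _ _ ha hb => exact ha.mul_right hb
  | inv a _ ha => exact ha.inv_right

lemma z_mul (x : Tn n) : tz n * x = x * tz n := (z_comm x).eq

lemma bk_succ (n r : ℕ) : bk n r (r+1) = tt n r := by rw [bk]; simp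

lemma bk_step (n r s : ℕ) (h : r + 1 < s) :
    bk n r s = tt n r * bk n (r+1) s * tt n r * tz n := by
  rw [bk]; rw [dif_neg (by omega), dif_pos h]

lemma z_inv : (tz n)⁻¹ = tz n := inv_eq_of_mul_eq_one_right z_sq
lemma t_inv (k : ℕ) : (tt n k)⁻¹ = tt n k := inv_eq_of_mul_eq_one_right (t_sq k)

lemma zp_t (k : ℕ) (y : Tn n) : tt n k * (tz n * y) = tz n * (tt n k * y) := by
  rw [← mul_assoc, ← z_mul (tt n k), mul_assoc]
lemma zp_bk (a b : ℕ) (y : Tn n) : bk n a b * (tz n * y) = tz n * (bk n a b * y) := by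
  rw [← mul_assoc, ← z_mul (bk n a b), mul_assoc]
lemma zs_t (k : ℕ) : tt n k * tz n = tz n * tt n k := (z_mul (tt n k)).symm
lemma zs_bk (a b : ℕ) : bk n a b * tz n = tz n * bk n a b := (z_mul (bk n a b)).symm
lemma zzp (y : Tn n) : tz n * (tz n * y) = y := by rw [← mul_assoc, z_sq, one_mul]
lemma ttp (k : ℕ) (y : Tn n) : tt n k * (tt n k * y) = y := by
  rw [← mul_assoc, t_sq, one_mul]

lemma conj4 {G : Type*} [Group G] {g c : G} (hg : g * g = 1) (hc : g * c = c * g)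
    (x y w : G) :
    g * (x * y * w * c) * g = (g * x * g) * (g * y * g) * (g * w * g) * c := by
  have hgg : ∀ u : G, g * (g * u) = u := fun u => by rw [← mul_assoc, hg, one_mul]
  simp only [mul_assoc, hgg]
  rw [hc]

lemma conj_tt {k a : ℕ} (hk : k < n - 1) (ha : a < n - 1) (h : k + 1 < a ∨ a + 1 < k) :
    tt n k * tt n a * tt n k = tt n a * tz n := by
  rw [t_comm hk ha h]
  simp only [mul_assoc, zp_t, zs_t, t_sq, ttp, mul_one, one_mul]

/-- `sw k` is the transposition `(k, k+1)` acting on `ℕ`. -/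
def sw (k x : ℕ) : ℕ := if x = k then k + 1 else if x = k + 1 then k else x

lemma sw_self (k : ℕ) : sw k k = k + 1 := by simp [sw]
lemma sw_succ (k : ℕ) : sw k (k + 1) = k := by simp [sw]
lemma sw_other {k x : ℕ} (h1 : x ≠ k) (h2 : x ≠ k + 1) : sw k x = x := by
  simp [sw, h1, h2]

set_option maxHeartbeats 1000000 in
lemma conj_bk (k a b : ℕ) (hab : a < b) (hb : b < n) (hk : k + 1 < n) :
    tt n k * bk n a b * tt n k =
      if k = a ∧ k + 1 = b then bk n a b else bk n (sw k a) (sw k b) * tz n := by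
  have hk' : k < n - 1 := by omega
  by_cases hb1 : a + 1 = b
  · subst hb1
    rw [bk_succ]
    by_cases h1 : k = a
    · subst h1
      rw [if_pos ⟨rfl, rfl⟩, t_sq, one_mul]
    · by_cases h2 : k + 1 = a
      · subst h2
        rw [if_neg (by omega), sw_succ, sw_other (by omega) (by omega),
          bk_step n k (k + 1 + 1) (by omega), bk_succ]
        simp only [mul_assoc, zp_t, zp_bk, zs_t, zs_bk, z_sq, zzp, ttp, t_sq, one_mul, mul_one]
      · by_cases h3 : k = a + 1
        · subst h3
          rw [if_neg (by omega), sw_other (by omega) (by omega), sw_self,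
            bk_step n a (a + 1 + 1) (by omega)]
          have hM : bk n (a + 1) (a + 1 + 1) = tt n (a + 1) := bk_succ n (a + 1)
          rw [hM, braid (by omega)]
          simp only [mul_assoc, zp_t, zp_bk, zs_t, zs_bk, z_sq, zzp, ttp, t_sq, one_mul, mul_one]
        · rw [if_neg (by omega), sw_other (by omega) (by omega),
            sw_other (by omega) (by omega), bk_succ,
            conj_tt hk' (by omega) (by omega)]
  · have hab2 : a + 1 < b := by omega
    rw [bk_step n a b hab2]
    by_cases h1 : k = a
    · subst h1
      rw [if_neg (by omega), sw_self, sw_other (by omega) (by omega),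
        conj4 (t_sq k) (zs_t k)]
      simp only [mul_assoc, zp_t, zp_bk, zs_t, zs_bk, z_sq, zzp, ttp, t_sq, one_mul, mul_one]
    · by_cases h2 : k + 1 = a
      · subst h2
        rw [if_neg (by omega), sw_succ, sw_other (by omega) (by omega),
          bk_step n k b (by omega), bk_step n (k + 1) b hab2]
        simp only [mul_assoc, zp_t, zp_bk, zs_t, zs_bk, z_sq, zzp, ttp, t_sq, one_mul, mul_one]
      · by_cases h3 : k = b
        · subst h3
          rw [if_neg (by omega), sw_other (by omega) (by omega), sw_self,
            conj4 (t_sq k) (zs_t k)]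
          have e1 : tt n k * tt n a * tt n k = tt n a * tz n :=
            conj_tt hk' (by omega) (by omega)
          have e2 := conj_bk k (a + 1) k (by omega) hb hk
          rw [if_neg (by omega), sw_other (by omega) (by omega), sw_self] at e2
          rw [e1, e2, bk_step n a (k + 1) (by omega)]
          simp only [mul_assoc, zp_t, zp_bk, zs_t, zs_bk, z_sq, zzp, ttp, t_sq, one_mul, mul_one]
        · by_cases h4 : k + 1 = b
          · subst h4
            by_cases h5 : a + 1 = k
            · subst h5
              have hM : bk n (a + 1) (a + 1 + 1) = tt n (a + 1) := bk_succ n (a + 1)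
              rw [if_neg (by omega), sw_other (by omega) (by omega), sw_succ, hM,
                braid (by omega), bk_succ]
              simp only [mul_assoc, zp_t, zp_bk, zs_t, zs_bk, z_sq, zzp, ttp, t_sq, one_mul, mul_one]
            · rw [if_neg (by omega), sw_other (by omega) (by omega), sw_succ,
                conj4 (t_sq k) (zs_t k)]
              have e1 : tt n k * tt n a * tt n k = tt n a * tz n :=
                conj_tt hk' (by omega) (by omega)
              have e2 := conj_bk k (a + 1) (k + 1) (by omega) hb hk
              rw [if_neg (by omega), sw_other (by omega) (by omega), sw_succ] at e2
              rw [e1, e2, bk_step n a k (by omega)]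
              simp only [mul_assoc, zp_t, zp_bk, zs_t, zs_bk, z_sq, zzp, ttp, t_sq, one_mul, mul_one]
          · by_cases h5 : k = a + 1
            · subst h5
              rw [if_neg (by omega), sw_other (by omega) (by omega),
                sw_other (by omega) (by omega), bk_step n a b hab2,
                bk_step n (a + 1) b (by omega)]
              have hbr : tt n a * tt n (a + 1) * tt n a =
                  tt n (a + 1) * tt n a * tt n (a + 1) := braid (by omega)
              have e := conj_bk a (a + 1 + 1) b (by omega) hb (by omega)
              rw [if_neg (by omega), sw_other (by omega) (by omega),
                sw_other (by omega) (by omega)] at e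
              have r1 : ∀ y : Tn n, tt n (a+1) * (tt n a * (tt n (a+1) * y)) =
                  tt n a * (tt n (a+1) * (tt n a * y)) := by
                intro y
                rw [← mul_assoc, ← mul_assoc, ← hbr, mul_assoc, mul_assoc]
              have r2 : tt n (a+1) * (tt n a * tt n (a+1)) =
                  tt n a * (tt n (a+1) * tt n a) := by
                rw [← mul_assoc, ← hbr, mul_assoc]
              have r3 : ∀ y : Tn n, tt n a * (bk n (a+1+1) b * (tt n a * y)) =
                  bk n (a+1+1) b * (tz n * y) := by
                intro y
                rw [← mul_assoc, ← mul_assoc, e, mul_assoc]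
              simp only [mul_assoc, zp_t, zp_bk, zs_t, zs_bk, z_sq, zzp, ttp, t_sq, one_mul, mul_one]
              rw [r1, r2, r3]
              simp only [mul_assoc, zp_t, zp_bk, zs_t, zs_bk, z_sq, zzp, ttp, t_sq, one_mul, mul_one]
            · rw [if_neg (by omega), sw_other (by omega) (by omega),
                sw_other (by omega) (by omega), conj4 (t_sq k) (zs_t k)]
              have e1 : tt n k * tt n a * tt n k = tt n a * tz n :=
                conj_tt hk' (by omega) (by omega)
              have e2 := conj_bk k (a + 1) b (by omega) hb hk
              rw [if_neg (by omega), sw_other (by omega) (by omega),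
                sw_other (by omega) (by omega)] at e2
              rw [e1, e2, bk_step n a b hab2]
              simp only [mul_assoc, zp_t, zp_bk, zs_t, zs_bk, z_sq, zzp, ttp, t_sq, one_mul, mul_one]
termination_by b - a
decreasing_by all_goals omega

/-- The section on 3-cycles: `uu n a b c` is `u_{(a b c)}` written with minimal entry first. -/
def uu (n a b c : ℕ) : Tn n :=
  if a < b ∧ a < c then bk n a c * bk n a b
  else if b < c then bk n b a * bk n b c
  else bk n c b * bk n c a

lemma uu_cyclic {a b c : ℕ} (hab : a ≠ b) (hac : a ≠ c) (hbc : b ≠ c) :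
    uu n a b c = uu n b c a := by
  unfold uu
  split_ifs <;> first | rfl | omega

lemma conj_mul {G : Type*} [Group G] {g : G} (hg : g * g = 1) (x y : G) :
    g * (x * y) * g = (g * x * g) * (g * y * g) := by
  have hgg : ∀ u : G, g * (g * u) = u := fun u => by rw [← mul_assoc, hg, one_mul]
  simp only [mul_assoc, hgg]

lemma uu_conj_min (k a b c : ℕ) (hab : a < b) (hac : a < c) (hbc : b ≠ c)
    (hbn : b < n) (hcn : c < n) (hk : k + 1 < n) :
    tt n k * uu n a b c * tt n k = uu n (sw k a) (sw k b) (sw k c) := by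
  rw [uu, if_pos ⟨hab, hac⟩, conj_mul (t_sq k)]
  have e1 := conj_bk k a c hac hcn hk
  have e2 := conj_bk k a b hab hbn hk
  by_cases hc1 : k = a ∧ k + 1 = c
  · obtain ⟨rfl, hc⟩ := hc1
    subst hc
    rw [if_pos ⟨rfl, rfl⟩] at e1
    rw [if_neg (by omega), sw_self, sw_other (by omega) (by omega)] at e2
    rw [e1, e2, sw_self, sw_succ, sw_other (by omega) (by omega),
      uu, if_neg (by omega), if_neg (by omega)]
    rw [bk_succ, bk_step n k b (by omega)]
    simp only [mul_assoc, zp_t, zp_bk, zs_t, zs_bk, z_sq, zzp, ttp, t_sq, one_mul, mul_one]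
  · by_cases hc2 : k = a ∧ k + 1 = b
    · obtain ⟨rfl, hc⟩ := hc2
      subst hc
      rw [if_pos ⟨rfl, rfl⟩] at e2
      rw [if_neg (by omega), sw_self, sw_other (by omega) (by omega)] at e1
      rw [e1, e2, sw_self, sw_succ, sw_other (by omega) (by omega),
        uu, if_neg (by omega), if_pos (by omega : k < c)]
      rw [bk_succ, bk_step n k c (by omega)]
      simp only [mul_assoc, zp_t, zp_bk, zs_t, zs_bk, z_sq, zzp, ttp, t_sq, one_mul, mul_one]
    · rw [if_neg (by omega)] at e1
      rw [if_neg (by omega)] at e2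
      have h1 : sw k a < sw k b := by unfold sw; split_ifs <;> omega
      have h2 : sw k a < sw k c := by unfold sw; split_ifs <;> omega
      rw [e1, e2, uu, if_pos ⟨h1, h2⟩]
      simp only [mul_assoc, zp_t, zp_bk, zs_t, zs_bk, z_sq, zzp, ttp, t_sq, one_mul, mul_one]

lemma sw_ne {k x y : ℕ} (h : x ≠ y) : sw k x ≠ sw k y := by
  unfold sw; split_ifs <;> omega

lemma uu_conj (k a b c : ℕ) (hab : a ≠ b) (hac : a ≠ c) (hbc : b ≠ c)
    (han : a < n) (hbn : b < n) (hcn : c < n) (hk : k + 1 < n) :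
    tt n k * uu n a b c * tt n k = uu n (sw k a) (sw k b) (sw k c) := by
  rcases lt_trichotomy a b with h | h | h
  · rcases lt_trichotomy a c with h' | h' | h'
    · exact uu_conj_min k a b c h h' hbc hbn hcn hk
    · omega
    · -- c < a < b : c is min
      rw [uu_cyclic hab hac hbc, uu_cyclic hbc (Ne.symm hab) (Ne.symm hac),
        uu_conj_min k c a b h' (by omega) hab han hbn hk,
        uu_cyclic (sw_ne (Ne.symm hac)) (sw_ne (Ne.symm hbc)) (sw_ne hab),
        uu_cyclic (sw_ne hab) (sw_ne hac) (sw_ne hbc)]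
  · omega
  · rcases lt_trichotomy b c with h' | h' | h'
    · -- b < a, b < c : b min
      rw [uu_cyclic hab hac hbc,
        uu_conj_min k b c a h' (by omega) (Ne.symm hac) hcn han hk,
        uu_cyclic (sw_ne hab) (sw_ne hac) (sw_ne hbc)]
    · omega
    · -- c < b < a : c min
      rw [uu_cyclic hab hac hbc, uu_cyclic hbc (Ne.symm hab) (Ne.symm hac),
        uu_conj_min k c a b (by omega) (by omega) hab han hbn hk,
        uu_cyclic (sw_ne (Ne.symm hac)) (sw_ne (Ne.symm hbc)) (sw_ne hab),
        uu_cyclic (sw_ne hab) (sw_ne hac) (sw_ne hbc)]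

lemma swap_coe {v : ℕ} (h1 : v < n) (h2 : v + 1 < n) (x : Fin n) :
    ((Equiv.swap ⟨v, h1⟩ ⟨v + 1, h2⟩ : Equiv.Perm (Fin n)) x : ℕ) = sw v (x : ℕ) := by
  rw [Equiv.swap_apply_def, sw]
  simp only [Fin.ext_iff, apply_ite (Fin.val : Fin n → ℕ)]

lemma key (p : Tn n →* Equiv.Perm (Fin n))
    (hp : ∀ (r : ℕ) (h : r + 1 < n),
      p (tt n r) = Equiv.swap ⟨r, Nat.lt_of_succ_lt h⟩ ⟨r + 1, h⟩)
    (hz : p (tz n) = 1) (τ : Tn n) :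
    ∀ a b c : Fin n, a ≠ b → a ≠ c → b ≠ c →
      τ * uu n (a : ℕ) (b : ℕ) (c : ℕ) * τ⁻¹ =
        uu n ((p τ a : Fin n) : ℕ) ((p τ b : Fin n) : ℕ) ((p τ c : Fin n) : ℕ) := by
  obtain ⟨w, rfl⟩ := PresentedGroup.mk_surjective (TnRels n) τ
  induction w using FreeGroup.induction_on with
  | C1 =>
    intro a b c _ _ _
    simp [map_one]
  | of g =>
    intro a b c hab hac hbc
    have hmk : PresentedGroup.mk (TnRels n) (FreeGroup.of g) = PresentedGroup.of g := rfl
    rw [hmk]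
    rcases g with r | u
    · have hr : (r : ℕ) + 1 < n := by have := r.isLt; omega
      rw [of_eq_tt]
      rw [show (tt n (r : ℕ))⁻¹ = tt n (r : ℕ) from t_inv _]
      rw [hp (r : ℕ) hr]
      rw [swap_coe _ hr a, swap_coe _ hr b, swap_coe _ hr c]
      exact uu_conj (r : ℕ) a b c (by simpa [Fin.ext_iff] using hab)
        (by simpa [Fin.ext_iff] using hac) (by simpa [Fin.ext_iff] using hbc)
        a.isLt b.isLt c.isLt hr
    · obtain ⟨⟩ := u
      have htz : (PresentedGroup.of (Sum.inr ()) : Tn n) = tz n := rfl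
      rw [htz, hz, z_inv, ← z_mul, zzp]
      simp
  | inv_of g ih =>
    intro a b c hab hac hbc
    have d1 : (p (PresentedGroup.mk (TnRels n) (FreeGroup.of g)))⁻¹ a ≠
        (p (PresentedGroup.mk (TnRels n) (FreeGroup.of g)))⁻¹ b := fun h => hab (by
      simpa using congrArg (p (PresentedGroup.mk (TnRels n) (FreeGroup.of g))) h)
    have d2 : (p (PresentedGroup.mk (TnRels n) (FreeGroup.of g)))⁻¹ a ≠
        (p (PresentedGroup.mk (TnRels n) (FreeGroup.of g)))⁻¹ c := fun h => hac (by
      simpa using congrArg (p (PresentedGroup.mk (TnRels n) (FreeGroup.of g))) h)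
    have d3 : (p (PresentedGroup.mk (TnRels n) (FreeGroup.of g)))⁻¹ b ≠
        (p (PresentedGroup.mk (TnRels n) (FreeGroup.of g)))⁻¹ c := fun h => hbc (by
      simpa using congrArg (p (PresentedGroup.mk (TnRels n) (FreeGroup.of g))) h)
    have h2 := ih _ _ _ d1 d2 d3
    simp only [Equiv.Perm.coe_inv, Equiv.apply_symm_apply] at h2
    rw [map_inv, ← h2]
    group
    simp [map_zpow]
  | mul u v ihu ihv =>
    intro a b c hab hac hbc
    rw [map_mul, map_mul]
    set X := PresentedGroup.mk (TnRels n) u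
    set Y := PresentedGroup.mk (TnRels n) v
    have dab : p Y a ≠ p Y b := fun h => hab ((p Y).injective h)
    have dac : p Y a ≠ p Y c := fun h => hac ((p Y).injective h)
    have dbc : p Y b ≠ p Y c := fun h => hbc ((p Y).injective h)
    have step1 := ihv a b c hab hac hbc
    have step2 := ihu (p Y a) (p Y b) (p Y c) dab dac dbc
    calc X * Y * uu n (a : ℕ) (b : ℕ) (c : ℕ) * (X * Y)⁻¹
        = X * (Y * uu n (a : ℕ) (b : ℕ) (c : ℕ) * Y⁻¹) * X⁻¹ := by group
      _ = X * uu n ((p Y a : Fin n) : ℕ) ((p Y b : Fin n) : ℕ) ((p Y c : Fin n) : ℕ) * X⁻¹ := by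
          rw [step1]
      _ = _ := by rw [step2]; simp [Equiv.Perm.mul_apply]

end SchurAux

/-- For the 3-cycle `(r s r')` (sending `r ↦ s ↦ r' ↦ r`) with `r < s` and `r < r'`,
the section is `u_{(r s r')} = [r r'][r s]`. For every `σ ∈ S_n` (lift `τ`,
conjugation `σ ▷ ν = τ ν τ⁻¹`): `σ ▷ u_{(r s r')} = u_{σ (r s r') σ⁻¹}`, where
`σ(r s r')σ⁻¹ = (σr σs σr')` is rewritten as a 3-cycle with minimal entry first. -/
theorem stmt15 (n : ℕ) (p : Tn n →* Equiv.Perm (Fin n))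
    (hp : ∀ (r : ℕ) (h : r + 1 < n),
      p (tt n r) = Equiv.swap ⟨r, by omega⟩ ⟨r + 1, h⟩)
    (hz : p (tz n) = 1)
    (σ : Equiv.Perm (Fin n)) (τ : Tn n) (hτ : p τ = σ)
    (r s r' : Fin n) (hrs : r < s) (hrr' : r < r') (hsr' : s ≠ r') :
    τ * (bk n r r' * bk n r s) * τ⁻¹ =
      if σ r < σ s ∧ σ r < σ r' then bk n (σ r) (σ r') * bk n (σ r) (σ s)
      else if σ s < σ r ∧ σ s < σ r' then bk n (σ s) (σ r) * bk n (σ s) (σ r')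
      else bk n (σ r') (σ s) * bk n (σ r') (σ r) := by
  classical
  have hkey := SchurAux.key p hp hz τ r s r' hrs.ne hrr'.ne hsr'
  rw [hτ] at hkey
  rw [SchurAux.uu, if_pos ⟨hrs, hrr'⟩] at hkey
  rw [hkey]
  have e1 : ((σ r : Fin n) : ℕ) ≠ ((σ s : Fin n) : ℕ) :=
    fun h => hrs.ne (σ.injective (Fin.ext h))
  have e2 : ((σ r : Fin n) : ℕ) ≠ ((σ r' : Fin n) : ℕ) :=
    fun h => hrr'.ne (σ.injective (Fin.ext h))
  have e3 : ((σ s : Fin n) : ℕ) ≠ ((σ r' : Fin n) : ℕ) :=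
    fun h => hsr' (σ.injective (Fin.ext h))
  rw [SchurAux.uu]
  simp only [Fin.lt_def]
  split_ifs <;> first | rfl | omega
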